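/- Theorem 1 (performance gap of full mixture reuse, formal version). In the bivariate log-linear setup with feasible sets S(p₁), let p̃₁, p₁' ∈ Δ^{d₁−1}, let r*(p̃₁) minimize F(·, p̃₁) over S(p̃₁) and r*(p₁') minimize F(·, p₁') over S(p₁'), and assume: (i) for each p₁ the map r ↦ F(r, p₁) is μ-strongly convex on Δ^{d₂} with μ > 0; (ii) mutual feasibility, i.e. r*(p̃₁) ∈ S(p₁') and r*(p₁') ∈ S(p̃₁). Write q*(p̃₁) := Φ_{p̃₁}(r*(p̃₁)) and q* := Φ_{p₁'}(r*(p₁')), and assume q* is the minimizer of the full (unreused) mixing problem, so that p₁' equals the normalized restriction of q* to the first d₁ coordinates. Let a_max := max_{1≤i≤n} ‖A_{i,1}‖₂. Then F(q*(p̃₁)) − F(q*) ≤ C·‖p̃₁ − p₁'‖, where C = F̄(q*)·exp(a_max·‖p̃₁ − p₁'‖)·( (F̄(q*(p̃₁))/μ)·‖α_fix + α_comp‖·κ(α_fix, α_comp) + ‖α_fix‖ ). -/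

import Mathlib

noncomputable section
open scoped RealInnerProductSpace BigOperators

/-- Euclidean space `ℝ^m`. -/
abbrev Euc (m : ℕ) := EuclideanSpace ℝ (Fin m)

/-- Build a vector of `ℝ^m` from its coordinates. -/
def vecOf {m : ℕ} (f : Fin m → ℝ) : Euc m := (WithLp.equiv 2 _).symm f

/-- The probability simplex in `ℝ^m`. -/
def probSimplex (m : ℕ) : Set (Euc m) := {p | (∀ i, 0 ≤ p i) ∧ ∑ i, p i = 1}

/-- A point of the collapsed space `ℝ^{1+d₂}` from `(ρ, b₂)`; coordinate `0` is `ρ`. -/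
def pairR {d₂ : ℕ} (ρ : ℝ) (b₂ : Fin d₂ → ℝ) : Euc (d₂ + 1) := vecOf (Fin.cons ρ b₂)

/-- The collapsed simplex `Δ^{d₂} = {(ρ, b₂) : ρ ≥ 0, b₂ ≥ 0, ρ + Σ_j (b₂)_j = 1}`. -/
def collapsedSimplex (d₂ : ℕ) : Set (Euc (d₂ + 1)) := probSimplex (d₂ + 1)

/-- A point of the full space `ℝ^{d₁+d₂}` from its two blocks of coordinates. -/
def pairQ {d₁ d₂ : ℕ} (x : Fin d₁ → ℝ) (y : Fin d₂ → ℝ) : Euc (d₁ + d₂) :=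
  vecOf (Fin.append x y)

/-- The expansion map `Φ_{p₁}(ρ, b₂) = (ρ·p₁, b₂)`. -/
def Phi {d₁ d₂ : ℕ} (p₁ : Euc d₁) (r : Euc (d₂ + 1)) : Euc (d₁ + d₂) :=
  pairQ (fun j => r 0 * p₁ j) (fun j => r j.succ)

variable {n d₁ d₂ : ℕ}

/-- `⟨A_i, q⟩` where `A_i = (A_{i,1}, A_{i,2})`. -/
def innerA (A₁ : Fin n → Euc d₁) (A₂ : Fin n → Euc d₂) (i : Fin n) (q : Euc (d₁ + d₂)) : ℝ :=
  ⟪pairQ (A₁ i) (A₂ i), q⟫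

/-- `F̄(q) = (1/n)·Σ_i exp(⟨A_i, q⟩)`. -/
def Fbar (A₁ : Fin n → Euc d₁) (A₂ : Fin n → Euc d₂) (q : Euc (d₁ + d₂)) : ℝ :=
  (1 / (n : ℝ)) * ∑ i, Real.exp (innerA A₁ A₂ i q)

/-- `F(q) = (1/n)·Σ_i (c_i + exp(⟨A_i, q⟩))`. -/
def Ffull (c : Fin n → ℝ) (A₁ : Fin n → Euc d₁) (A₂ : Fin n → Euc d₂)
    (q : Euc (d₁ + d₂)) : ℝ :=
  (1 / (n : ℝ)) * ∑ i, (c i + Real.exp (innerA A₁ A₂ i q))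

/-- The bivariate objective `F(r, p₁) := F(Φ_{p₁}(r))`. -/
def Fb (c : Fin n → ℝ) (A₁ : Fin n → Euc d₁) (A₂ : Fin n → Euc d₂)
    (r : Euc (d₂ + 1)) (p₁ : Euc d₁) : ℝ :=
  Ffull c A₁ A₂ (Phi p₁ r)


/-- Collapsed feasible set
`S(p₁) = {(ρ, b₂) ∈ Δ^{d₂} : ρ ≤ min_j k·N_j'/(R·(p₁)_j), (b₂)_j ≤ k·N_{d₁+j}'/R}`. -/
def feasR (d₁ d₂ : ℕ) (N' : Fin (d₁ + d₂) → ℝ) (k R : ℝ) (p₁ : Euc d₁) :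
    Set (Euc (d₂ + 1)) :=
  {r | r ∈ collapsedSimplex d₂ ∧
    r 0 ≤ ⨅ j : Fin d₁, k * N' (Fin.castAdd d₂ j) / (R * p₁ j) ∧
    ∀ j : Fin d₂, r j.succ ≤ k * N' (Fin.natAdd d₁ j) / R}

/-- Feasible set of the full (unreused) mixing problem,
`{q ∈ Δ^{d₁+d₂−1} : q_j ≤ k·N_j'/R}`. -/
def feasQ (d₁ d₂ : ℕ) (N' : Fin (d₁ + d₂) → ℝ) (k R : ℝ) : Set (Euc (d₁ + d₂)) :=
  {q | q ∈ probSimplex (d₁ + d₂) ∧ ∀ j, q j ≤ k * N' j / R}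

/-- The coupling term `κ(α_fix, α_comp) = ‖(𝟏 + α_fix + α_comp) ⊙ α_fix‖`. -/
def kappa {n d₁ d₂ : ℕ} (A₁ : Fin n → Euc d₁) (A₂ : Fin n → Euc d₂) : ℝ :=
  ‖vecOf (fun i => (1 + ‖A₁ i‖ + ‖A₂ i‖) * ‖A₁ i‖)‖

/-! Since `r*(p₁')` lies in `S(p̃₁)`, optimality of `r*(p̃₁)` gives
`F(q*(p̃₁)) ≤ F(r*(p₁'), p̃₁)`, so the gap is at most the change of `F(r*(p₁'), ·)` from `p₁'`
to `p̃₁`. This moves each exponent `⟨A_i, Φ_{p₁}(r)⟩` by `ρ·⟨A_{i,1}, p̃₁ - p₁'⟩` with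
`0 ≤ ρ ≤ 1`, i.e. by at most `‖A_{i,1}‖·‖p̃₁ - p₁'‖ ≤ a_max·‖p̃₁ - p₁'‖`, and
`e^{b+δ} - e^b ≤ e^b·|δ|·e^{|δ|}`. Summing over `i` bounds the gap by
`F̄(q*)·‖α_fix‖·exp(a_max·‖p̃₁ - p₁'‖)·‖p̃₁ - p₁'‖`; the coupling part of `C` is nonnegative. -/

lemma Real.exp_sub_one_le_mul_exp (x : ℝ) : Real.exp x - 1 ≤ x * Real.exp x := by
  have h := mul_le_mul_of_nonneg_right (Real.one_sub_le_exp_neg x) (Real.exp_pos x).le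
  rw [← Real.exp_add, neg_add_cancel, Real.exp_zero] at h
  linarith

lemma Real.exp_add_sub_exp_le {b δ M : ℝ} (hδ : |δ| ≤ M) :
    Real.exp (b + δ) - Real.exp b ≤ Real.exp b * (|δ| * Real.exp M) := by
  have hexp : Real.exp δ - 1 ≤ |δ| * Real.exp M :=
    calc Real.exp δ - 1 ≤ δ * Real.exp δ := Real.exp_sub_one_le_mul_exp δ
      _ ≤ |δ| * Real.exp |δ| := by gcongr; exacts [le_abs_self δ, le_abs_self δ]
      _ ≤ |δ| * Real.exp M := by gcongr
  calc Real.exp (b + δ) - Real.exp b = Real.exp b * (Real.exp δ - 1) := by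
        rw [Real.exp_add]; ring
    _ ≤ Real.exp b * (|δ| * Real.exp M) := by gcongr

lemma probSimplex.apply_le_one {m : ℕ} {p : Euc m} (hp : p ∈ probSimplex m) (i : Fin m) :
    p i ≤ 1 :=
  hp.2 ▸ Finset.single_le_sum (fun j _ => hp.1 j) (Finset.mem_univ i)

lemma sum_mul_le_sum_mul_norm_vecOf {m : ℕ} (w α : Fin m → ℝ) (hw : ∀ i, 0 ≤ w i) :
    ∑ i, w i * α i ≤ (∑ i, w i) * ‖vecOf α‖ := by
  rw [Finset.sum_mul]
  refine Finset.sum_le_sum fun i _ => mul_le_mul_of_nonneg_left ?_ (hw i)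
  calc α i ≤ ‖α i‖ := Real.le_norm_self _
    _ = ‖vecOf α i‖ := rfl
    _ ≤ ‖vecOf α‖ := PiLp.norm_apply_le _ i

lemma innerA_Phi (A₁ : Fin n → Euc d₁) (A₂ : Fin n → Euc d₂) (i : Fin n)
    (p : Euc d₁) (r : Euc (d₂ + 1)) :
    innerA A₁ A₂ i (Phi p r) = r 0 * ⟪A₁ i, p⟫ + ∑ j, A₂ i j * r j.succ := by
  simp only [innerA, Phi, pairQ, vecOf, PiLp.inner_apply, RCLike.inner_apply, conj_trivial,
    WithLp.equiv_symm_apply, Fin.sum_univ_add, Fin.append_left, Fin.append_right,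
    Finset.mul_sum]
  congr 1 <;> exact Finset.sum_congr rfl fun j _ => by ring

lemma abs_innerA_Phi_sub_le (A₁ : Fin n → Euc d₁) (A₂ : Fin n → Euc d₂) (i : Fin n)
    (p p' : Euc d₁) {r : Euc (d₂ + 1)} (hr : r ∈ collapsedSimplex d₂) :
    |innerA A₁ A₂ i (Phi p r) - innerA A₁ A₂ i (Phi p' r)| ≤ ‖A₁ i‖ * ‖p - p'‖ := by
  have hsub : innerA A₁ A₂ i (Phi p r) - innerA A₁ A₂ i (Phi p' r) = r 0 * ⟪A₁ i, p - p'⟫ := by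
    rw [innerA_Phi, innerA_Phi, inner_sub_right]; ring
  rw [hsub, abs_mul, abs_of_nonneg (hr.1 0)]
  exact (mul_le_of_le_one_left (abs_nonneg _) (probSimplex.apply_le_one hr 0)).trans
    (abs_real_inner_le_norm _ _)

lemma Fbar_nonneg (A₁ : Fin n → Euc d₁) (A₂ : Fin n → Euc d₂) (q : Euc (d₁ + d₂)) :
    0 ≤ Fbar A₁ A₂ q := by
  unfold Fbar; positivity

lemma Fb_sub_Fb_le (c : Fin n → ℝ) (A₁ : Fin n → Euc d₁) (A₂ : Fin n → Euc d₂) {a : ℝ}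
    (ha : ∀ i, ‖A₁ i‖ ≤ a) (p p' : Euc d₁) {r : Euc (d₂ + 1)} (hr : r ∈ collapsedSimplex d₂) :
    Fb c A₁ A₂ r p - Fb c A₁ A₂ r p' ≤
      Fbar A₁ A₂ (Phi p' r) * ‖vecOf (fun i => ‖A₁ i‖)‖ *
        (‖p - p'‖ * Real.exp (a * ‖p - p'‖)) := by
  set t := ‖p - p'‖
  set u := fun i => innerA A₁ A₂ i (Phi p r)
  set b := fun i => innerA A₁ A₂ i (Phi p' r)
  have hterm : ∀ i, Real.exp (u i) - Real.exp (b i) ≤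
      Real.exp (b i) * ‖A₁ i‖ * (t * Real.exp (a * t)) := fun i =>
    have hδ : |u i - b i| ≤ ‖A₁ i‖ * t := abs_innerA_Phi_sub_le A₁ A₂ i p p' hr
    calc Real.exp (u i) - Real.exp (b i) = Real.exp (b i + (u i - b i)) - Real.exp (b i) := by
          rw [add_sub_cancel]
      _ ≤ Real.exp (b i) * (|u i - b i| * Real.exp (a * t)) :=
          Real.exp_add_sub_exp_le (hδ.trans (by gcongr; exact ha i))
      _ ≤ Real.exp (b i) * (‖A₁ i‖ * t * Real.exp (a * t)) := by gcongr
      _ = Real.exp (b i) * ‖A₁ i‖ * (t * Real.exp (a * t)) := by ring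
  calc Fb c A₁ A₂ r p - Fb c A₁ A₂ r p'
      = 1 / (n : ℝ) * ∑ i, (Real.exp (u i) - Real.exp (b i)) := by
        simp only [Fb, Ffull, Finset.sum_add_distrib, Finset.sum_sub_distrib, u, b]; ring
    _ ≤ 1 / (n : ℝ) * ∑ i, Real.exp (b i) * ‖A₁ i‖ * (t * Real.exp (a * t)) := by
        gcongr with i; exact hterm i
    _ = 1 / (n : ℝ) * (∑ i, Real.exp (b i) * ‖A₁ i‖) * (t * Real.exp (a * t)) := by
        rw [← Finset.sum_mul]; ring
    _ ≤ 1 / (n : ℝ) * ((∑ i, Real.exp (b i)) * ‖vecOf (fun i => ‖A₁ i‖)‖) *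
          (t * Real.exp (a * t)) := by
        gcongr; exact sum_mul_le_sum_mul_norm_vecOf _ _ fun i => (Real.exp_pos _).le
    _ = Fbar A₁ A₂ (Phi p' r) * ‖vecOf (fun i => ‖A₁ i‖)‖ * (t * Real.exp (a * t)) := by
        rw [Fbar]; ring

theorem theorem1_performance_gap_general
    {n d₁ d₂ : ℕ}
    (c : Fin n → ℝ)
    (A₁ : Fin n → Euc d₁) (A₂ : Fin n → Euc d₂)
    (N' : Fin (d₁ + d₂) → ℝ)
    {k R : ℝ}
    {μ : ℝ} (hμ : 0 < μ)
    {ptil₁ p₁' : Euc d₁}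
    {rtil rstar : Euc (d₂ + 1)}
    (hrtilmin : IsMinOn (fun r => Fb c A₁ A₂ r ptil₁) (feasR d₁ d₂ N' k R ptil₁) rtil)
    (hmf₂ : rstar ∈ feasR d₁ d₂ N' k R ptil₁) :
    Ffull c A₁ A₂ (Phi ptil₁ rtil) - Ffull c A₁ A₂ (Phi p₁' rstar) ≤
      (Fbar A₁ A₂ (Phi p₁' rstar) * Real.exp ((⨆ i, ‖A₁ i‖) * ‖ptil₁ - p₁'‖) *
        ((Fbar A₁ A₂ (Phi ptil₁ rtil) / μ) * ‖vecOf (fun i => ‖A₁ i‖ + ‖A₂ i‖)‖ *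
            kappa A₁ A₂ +
          ‖vecOf (fun i => ‖A₁ i‖)‖)) * ‖ptil₁ - p₁'‖ := by
  have ha : ∀ i, ‖A₁ i‖ ≤ ⨆ i, ‖A₁ i‖ := le_ciSup (Set.finite_range _).bddAbove
  have hcoupling : 0 ≤ Fbar A₁ A₂ (Phi ptil₁ rtil) / μ *
      ‖vecOf (fun i => ‖A₁ i‖ + ‖A₂ i‖)‖ * kappa A₁ A₂ :=
    mul_nonneg (mul_nonneg (div_nonneg (Fbar_nonneg ..) hμ.le) (norm_nonneg _)) (norm_nonneg _)
  have hFbar := Fbar_nonneg A₁ A₂ (Phi p₁' rstar)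
  calc Fb c A₁ A₂ rtil ptil₁ - Fb c A₁ A₂ rstar p₁'
      ≤ Fb c A₁ A₂ rstar ptil₁ - Fb c A₁ A₂ rstar p₁' := sub_le_sub_right (hrtilmin hmf₂) _
    _ ≤ Fbar A₁ A₂ (Phi p₁' rstar) * ‖vecOf (fun i => ‖A₁ i‖)‖ *
          (‖ptil₁ - p₁'‖ * Real.exp ((⨆ i, ‖A₁ i‖) * ‖ptil₁ - p₁'‖)) :=
        Fb_sub_Fb_le c A₁ A₂ ha ptil₁ p₁' hmf₂.1
    _ = Fbar A₁ A₂ (Phi p₁' rstar) * Real.exp ((⨆ i, ‖A₁ i‖) * ‖ptil₁ - p₁'‖) *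
          (0 + ‖vecOf (fun i => ‖A₁ i‖)‖) * ‖ptil₁ - p₁'‖ := by ring
    _ ≤ _ := by gcongr

/-- **Theorem 1 (performance gap of full mixture reuse, formal version).**
In the bivariate log-linear setup with feasible sets `S(p₁)`, if `r*(p̃₁)` minimizes
`F(·, p̃₁)` over `S(p̃₁)`, `r*(p₁')` minimizes `F(·, p₁')` over `S(p₁')`, the map
`r ↦ F(r, p₁)` is `μ`-strongly convex on `Δ^{d₂}` for each `p₁`, mutual feasibility holds,
and `q* = Φ_{p₁'}(r*(p₁'))` minimizes the full mixing problem, then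
`F(q*(p̃₁)) − F(q*) ≤ C·‖p̃₁ − p₁'‖` with
`C = F̄(q*)·exp(a_max·‖p̃₁ − p₁'‖)·((F̄(q*(p̃₁))/μ)·‖α_fix + α_comp‖·κ + ‖α_fix‖)`. -/
theorem theorem1_performance_gap
    {n d₁ d₂ : ℕ} (hn : 0 < n) (hd₁ : 0 < d₁)
    (c : Fin n → ℝ) (hc : ∀ i, 0 < c i)
    (A₁ : Fin n → Euc d₁) (A₂ : Fin n → Euc d₂)
    (N' : Fin (d₁ + d₂) → ℝ) (hN : ∀ j, 0 < N' j)
    {k R : ℝ} (hk : 0 < k) (hR : 0 < R)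
    {μ : ℝ} (hμ : 0 < μ)
    (hsc : ∀ p₁ ∈ probSimplex d₁, ∀ x ∈ collapsedSimplex d₂, ∀ y ∈ collapsedSimplex d₂,
      Fb c A₁ A₂ x p₁ + ⟪gradient (fun r => Fb c A₁ A₂ r p₁) x, y - x⟫ +
        μ / 2 * ‖y - x‖ ^ 2 ≤ Fb c A₁ A₂ y p₁)
    {ptil₁ p₁' : Euc d₁} (hptil : ptil₁ ∈ probSimplex d₁) (hp₁' : p₁' ∈ probSimplex d₁)
    {rtil rstar : Euc (d₂ + 1)}
    (hrtil : rtil ∈ feasR d₁ d₂ N' k R ptil₁)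
    (hrtilmin : IsMinOn (fun r => Fb c A₁ A₂ r ptil₁) (feasR d₁ d₂ N' k R ptil₁) rtil)
    (hrstar : rstar ∈ feasR d₁ d₂ N' k R p₁')
    (hrstarmin : IsMinOn (fun r => Fb c A₁ A₂ r p₁') (feasR d₁ d₂ N' k R p₁') rstar)
    (hmf₁ : rtil ∈ feasR d₁ d₂ N' k R p₁')
    (hmf₂ : rstar ∈ feasR d₁ d₂ N' k R ptil₁)
    (hq : Phi p₁' rstar ∈ feasQ d₁ d₂ N' k R)
    (hqmin : IsMinOn (Ffull c A₁ A₂) (feasQ d₁ d₂ N' k R) (Phi p₁' rstar)) :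
    Ffull c A₁ A₂ (Phi ptil₁ rtil) - Ffull c A₁ A₂ (Phi p₁' rstar) ≤
      (Fbar A₁ A₂ (Phi p₁' rstar) * Real.exp ((⨆ i, ‖A₁ i‖) * ‖ptil₁ - p₁'‖) *
        ((Fbar A₁ A₂ (Phi ptil₁ rtil) / μ) * ‖vecOf (fun i => ‖A₁ i‖ + ‖A₂ i‖)‖ *
            kappa A₁ A₂ +
          ‖vecOf (fun i => ‖A₁ i‖)‖)) * ‖ptil₁ - p₁'‖ :=
  theorem1_performance_gap_general c A₁ A₂ N' hμ hrtilmin hmf₂
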